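/- arXiv:2112.15462 — 3 statements merged into one kernel-verified Lean document; each statement's English description precedes it below -/
import Mathlib

section
/- Let D_1, D_2 ⊆ F_2^m be nonempty, let D = D_1 + wD_2 ⊆ F_4^m (the map (d_1,d_2) ↦ d_1 + w·d_2 is a bijection from D_1 × D_2 onto D), and let Tr : F_4 → F_2, Tr(g) = g + g², be the trace map. Then the binary subfield code of the quaternary code C_D — namely the F_2-linear span of the vectors (Tr(x·d))_{d∈D} and (Tr(w·(x·d)))_{d∈D} as x ranges over F_4^m — equals the binary linear code with defining set D^{(2)} = {(d_2, d_1+d_2) ∈ F_2^{2m} : d_1 ∈ D_1, d_2 ∈ D_2}; explicitly, it equals {(α·d_2 + β·(d_1+d_2))_{(d_1,d_2) ∈ D_1×D_2} : α, β ∈ F_2^m}. -/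
open Finset

/-- The inner product of two binary vectors. -/
def dot2 {m : ℕ} (u v : Fin m → ZMod 2) : ZMod 2 := ∑ i, u i * v i

variable {F : Type} [Field F] [Fintype F] [DecidableEq F]

/-- The embedding of `F_2 = {0,1}` into a field `F`. -/
def e2 (a : ZMod 2) : F := (a.val : F)

/-- The inner product `x·d = Σ x_i d_i` of two vectors over `F`. -/
def dotF {m : ℕ} (x d : Fin m → F) : F := ∑ i, x i * d i

/-- The quaternary vector `d_1 + w·d_2` attached to a pair of binary vectors. -/
def dvec {m : ℕ} (w : F) (p : (Fin m → ZMod 2) × (Fin m → ZMod 2)) : Fin m → F :=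
  fun i => e2 (p.1 i) + w * e2 (p.2 i)

lemma zmod2_cases (a : ZMod 2) : a = 0 ∨ a = 1 := by revert a; decide

section aux
set_option linter.unusedSectionVars false

lemma e2_zero : (e2 0 : F) = 0 := by simp [e2]
lemma e2_one : (e2 1 : F) = 1 := by simp [e2, ZMod.val_one]

lemma dot2_add_left {m : ℕ} (a a' d : Fin m → ZMod 2) :
    dot2 (a + a') d = dot2 a d + dot2 a' d := by
  simp [dot2, add_mul, Finset.sum_add_distrib]

lemma dot2_add_right {m : ℕ} (a d d' : Fin m → ZMod 2) :
    dot2 a (d + d') = dot2 a d + dot2 a d' := by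
  simp [dot2, mul_add, Finset.sum_add_distrib]

lemma dot2_zero_left {m : ℕ} (d : Fin m → ZMod 2) : dot2 0 d = 0 := by
  simp [dot2]

lemma e2_inj (hne : (1 : F) ≠ 0) {a b : ZMod 2} (h : (e2 a : F) = e2 b) : a = b := by
  rcases zmod2_cases a with ha | ha <;> rcases zmod2_cases b with hb | hb <;>
    subst ha <;> subst hb <;> first
      | rfl
      | (exfalso; apply hne; rw [e2_zero, e2_one] at h; simp_all)

lemma e2_add (h2 : (1 : F) + 1 = 0) (a b : ZMod 2) :
    (e2 (a + b) : F) = e2 a + e2 b := by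
  rcases zmod2_cases a with ha | ha <;> rcases zmod2_cases b with hb | hb <;>
    subst ha <;> subst hb <;>
    simp [e2_zero, e2_one, show ((1 : ZMod 2) + 1 = 0) from by decide, h2]

lemma e2_mul (a b : ZMod 2) : (e2 (a * b) : F) = e2 a * e2 b := by
  rcases zmod2_cases a with ha | ha <;> rcases zmod2_cases b with hb | hb <;>
    subst ha <;> subst hb <;> simp [e2_zero, e2_one]

lemma e2_sum (h2 : (1 : F) + 1 = 0) {ι : Type*} (s : Finset ι) (f : ι → ZMod 2) :
    (e2 (∑ i ∈ s, f i) : F) = ∑ i ∈ s, (e2 (f i) : F) := by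
  induction s using Finset.cons_induction with
  | empty => simp [e2_zero]
  | cons i s hi ih => rw [Finset.sum_cons, Finset.sum_cons, e2_add h2, ih]

lemma e2_dot2 (h2 : (1 : F) + 1 = 0) {m : ℕ} (a d : Fin m → ZMod 2) :
    (e2 (dot2 a d) : F) = ∑ i, (e2 (a i) : F) * e2 (d i) := by
  rw [dot2, e2_sum h2]
  exact Finset.sum_congr rfl fun i _ => e2_mul _ _

lemma hdot_key (h2 : (1 : F) + 1 = 0) {w : F} (hw : w ^ 2 + w + 1 = 0)
    {m : ℕ} (a b d1 d2 : Fin m → ZMod 2) (x : Fin m → F)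
    (hx : x = fun i => (e2 (a i) : F) + w * e2 (b i)) :
    dotF x (dvec w (d1, d2))
      = e2 (dot2 a d1 + dot2 b d2)
        + w * e2 (dot2 a d2 + dot2 b d1 + dot2 b d2) := by
  have hw2 : w ^ 2 = w + 1 := by linear_combination hw - (w + 1) * h2
  subst hx
  have step : ∀ i : Fin m,
      ((e2 (a i) : F) + w * e2 (b i)) * (e2 (d1 i) + w * e2 (d2 i))
        = (e2 (a i) * e2 (d1 i) + e2 (b i) * e2 (d2 i))
          + w * (e2 (a i) * e2 (d2 i) + e2 (b i) * e2 (d1 i) + e2 (b i) * e2 (d2 i)) :=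
    fun i => by linear_combination (e2 (b i) * e2 (d2 i) : F) * hw2
  simp only [e2_add h2, e2_dot2 h2]
  calc dotF (fun i => (e2 (a i) : F) + w * e2 (b i)) (dvec w (d1, d2))
      = ∑ i : Fin m, ((e2 (a i) * e2 (d1 i) + e2 (b i) * e2 (d2 i))
          + w * (e2 (a i) * e2 (d2 i) + e2 (b i) * e2 (d1 i) + e2 (b i) * e2 (d2 i))) :=
        Finset.sum_congr rfl fun i _ => step i
    _ = _ := by
        simp only [Finset.sum_add_distrib, ← Finset.mul_sum]

end aux

/-- Let `D = D_1 + wD_2 ⊆ F_4^m` with `(d_1,d_2) ↦ d_1 + w·d_2` a bijection from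
`D_1 × D_2` onto `D`, and let `Tr : F_4 → F_2`, `Tr(g) = g + g²`, be the trace map.  The
binary subfield code of `C_D` — the `F_2`-span of the vectors `(Tr(x·d))_{d∈D}` and
`(Tr(w·(x·d)))_{d∈D}` for `x ∈ F_4^m` — equals the binary code with defining set
`D^{(2)} = {(d_2, d_1+d_2)}`, i.e. `{(α·d_2 + β·(d_1+d_2))_{(d_1,d_2)} : α, β ∈ F_2^m}`. -/
theorem subfield_code_of_quaternary_code {m : ℕ} (hm : 1 ≤ m)
    (hF : Fintype.card F = 4) (w : F) (hw : w ^ 2 + w + 1 = 0)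
    (Tr : F → ZMod 2) (hTr : ∀ g : F, e2 (Tr g) = g + g ^ 2)
    (D1 D2 : Finset (Fin m → ZMod 2)) (h1 : D1.Nonempty) (h2 : D2.Nonempty)
    (hbij : ∀ p ∈ D1 ×ˢ D2, ∀ q ∈ D1 ×ˢ D2, dvec w p = dvec w q → p = q) :
    (Submodule.span (ZMod 2)
        ((Set.range fun x : Fin m → F =>
            fun p : ↥(D1 ×ˢ D2) => Tr (dotF x (dvec w p.1))) ∪
         (Set.range fun x : Fin m → F =>
            fun p : ↥(D1 ×ˢ D2) => Tr (w * dotF x (dvec w p.1)))) : Set (↥(D1 ×ˢ D2) → ZMod 2))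
      = {f | ∃ α β : Fin m → ZMod 2,
          f = fun p : ↥(D1 ×ˢ D2) => dot2 α p.1.2 + dot2 β (p.1.1 + p.1.2)} := by
    classical
  have hne : (1 : F) ≠ 0 := one_ne_zero
  have htwo : (1 : F) + 1 = 0 := by
    have h := hTr 1
    rcases zmod2_cases (Tr 1) with h0 | h0 <;> rw [h0] at h
    · rw [e2_zero] at h; linear_combination -h
    · rw [e2_one] at h; exfalso; apply hne; linear_combination -h
  have hTr1 : ∀ u v : ZMod 2, Tr ((e2 u : F) + w * e2 v) = v := by
    intro u v
    apply e2_inj hne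
    rw [hTr]
    rcases zmod2_cases u with hu | hu <;> rcases zmod2_cases v with hv | hv <;>
      subst hu <;> subst hv <;> simp only [e2_zero, e2_one]
    · ring
    · linear_combination hw - htwo
    · linear_combination htwo
    · linear_combination hw + w * htwo
  have hTr2 : ∀ u v : ZMod 2, Tr (w * ((e2 u : F) + w * e2 v)) = u + v := by
    intro u v
    apply e2_inj hne
    rw [hTr, e2_add htwo]
    rcases zmod2_cases u with hu | hu <;> rcases zmod2_cases v with hv | hv <;>
      subst hu <;> subst hv <;> simp only [e2_zero, e2_one]
    · ring
    · linear_combination (w ^ 2 - w + 1) * hw - htwo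
    · linear_combination hw - htwo
    · linear_combination (w + w ^ 2) * hw - htwo
  have hdecomp : ∀ x : F, ∃ a b : ZMod 2, x = e2 a + w * e2 b := by
    intro x
    have hginj : Function.Injective (fun p : ZMod 2 × ZMod 2 => (e2 p.1 : F) + w * e2 p.2) := by
      rintro ⟨a, b⟩ ⟨c, d⟩ h
      simp only at h
      have hb : b = d := by
        have := congrArg Tr h
        rwa [hTr1, hTr1] at this
      subst hb
      have ha : (e2 a : F) = e2 c := by
        have h' : (e2 a : F) + w * e2 b = e2 c + w * e2 b := h
        exact add_right_cancel h'
      obtain rfl := e2_inj hne ha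
      rfl
    have hcard : Fintype.card (ZMod 2 × ZMod 2) = Fintype.card F := by
      simp [hF]
    have hgsurj := ((Fintype.bijective_iff_injective_and_card _).2 ⟨hginj, hcard⟩).2
    obtain ⟨p, hp⟩ := hgsurj x
    exact ⟨p.1, p.2, hp.symm⟩
  -- the target set as a submodule
  let S : Submodule (ZMod 2) (↥(D1 ×ˢ D2) → ZMod 2) :=
    { carrier := {f | ∃ α β : Fin m → ZMod 2,
          f = fun p : ↥(D1 ×ˢ D2) => dot2 α p.1.2 + dot2 β (p.1.1 + p.1.2)}
      add_mem' := by
        rintro f g ⟨α1, β1, rfl⟩ ⟨α2, β2, rfl⟩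
        refine ⟨α1 + α2, β1 + β2, ?_⟩
        funext p
        simp only [Pi.add_apply, dot2_add_left]
        ring
      zero_mem' := ⟨0, 0, by funext p; simp [dot2_zero_left]⟩
      smul_mem' := by
        rintro c f ⟨α, β, rfl⟩
        rcases zmod2_cases c with hc | hc <;> subst hc
        · exact ⟨0, 0, by funext p; simp [dot2_zero_left]⟩
        · exact ⟨α, β, by funext p; simp⟩ }
  have hgen : ((Set.range fun x : Fin m → F =>
            fun p : ↥(D1 ×ˢ D2) => Tr (dotF x (dvec w p.1))) ∪
         (Set.range fun x : Fin m → F =>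
            fun p : ↥(D1 ×ˢ D2) => Tr (w * dotF x (dvec w p.1)))) ⊆ (S : Set _) := by
    rintro f (⟨x, rfl⟩ | ⟨x, rfl⟩)
    · choose a b hab using fun i => hdecomp (x i)
      refine ⟨a, b, ?_⟩
      funext p
      rcases p with ⟨⟨pd1, pd2⟩, hp⟩
      show Tr (dotF x (dvec w (pd1, pd2))) = dot2 a pd2 + dot2 b (pd1 + pd2)
      rw [hdot_key htwo hw a b pd1 pd2 x (funext hab), hTr1, dot2_add_right]
      ring
    · choose a b hab using fun i => hdecomp (x i)
      refine ⟨b, a + b, ?_⟩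
      funext p
      rcases p with ⟨⟨pd1, pd2⟩, hp⟩
      show Tr (w * dotF x (dvec w (pd1, pd2))) = dot2 b pd2 + dot2 (a + b) (pd1 + pd2)
      rw [hdot_key htwo hw a b pd1 pd2 x (funext hab), hTr2,
        dot2_add_left, dot2_add_right, dot2_add_right]
      ring
  apply Set.Subset.antisymm
  · exact fun f hf => Submodule.span_le.2 hgen hf
  · rintro f ⟨α, β, rfl⟩
    apply Submodule.subset_span
    left
    refine ⟨fun i => e2 (α i) + w * e2 (β i), ?_⟩
    funext p
    rcases p with ⟨⟨pd1, pd2⟩, hp⟩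
    show Tr (dotF (fun i => e2 (α i) + w * e2 (β i)) (dvec w (pd1, pd2)))
      = dot2 α pd2 + dot2 β (pd1 + pd2)
    rw [hdot_key htwo hw α β pd1 pd2 _ rfl, hTr1, dot2_add_right]
    ring
end

section
/- Let A ⊊ [m] with m + |A| ≥ 2 and D = F_2^m + wΔ_A ⊆ F_4^m. Then C_{D^*} is a quaternary code of length 2^{m+|A|} − 1 with exactly 4^m distinct codewords (dimension m over F_4) and minimum distance 2^{m+|A|−1}, and the multiset {wt(c_{D^*}(x)) : x ∈ F_4^m} consists of: 0 once; 2^{m+|A|−1} with multiplicity 3(2^{m−|A|} − 1); and 3·2^{m+|A|−2} with multiplicity 4^m − 1 − 3(2^{m−|A|} − 1). In particular C_{D^*} is a two-weight code. -/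
open Finset

/-- The support of a binary vector, as a finset of coordinates. -/
def supp {m : ℕ} (v : Fin m → ZMod 2) : Finset (Fin m) :=
  Finset.univ.filter (fun i => v i ≠ 0)

/-- The simplicial complex generated by `A`: all binary vectors with support contained in `A`. -/
def delta {m : ℕ} (A : Finset (Fin m)) : Finset (Fin m → ZMod 2) :=
  Finset.univ.filter (fun v => supp v ⊆ A)

variable {F : Type} [Field F] [Fintype F] [DecidableEq F]

/-- The Hamming weight of the codeword `c_D(x) = (x·d)_{d∈D}`. -/
def wtF {m : ℕ} (D : Finset (Fin m → F)) (x : Fin m → F) : ℕ :=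
  (D.filter (fun d => dotF x d ≠ 0)).card

/-- The codeword `c_D(x) = (x·d)_{d∈D}` of the code with defining set `D`. -/
def codeword {m : ℕ} (D : Finset (Fin m → F)) (x : Fin m → F) : {d // d ∈ D} → F :=
  fun d => dotF x d.1

/-!
For `x ∈ F_4^m`, the map `d ↦ x·d` is additive on `D = F_2^m + wΔ_A`, a group of order
`2^{m+|A|}`. Its kernel has index `r = |image|`, which divides `4`, so
`wt(c_D(x)) = |D| (1 - 1/r)` is `0`, `2^{m+|A|-1}` or `3·2^{m+|A|-2}` for `r = 1, 2, 4`.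
The image is trivial only for `x = 0`. It has two elements exactly when `x = λ b` with `λ ≠ 0`
and `b` a nonzero binary vector vanishing on `A`: then the image is `{0, λ}`, and conversely an
image `{0, λ}` forces every `x_i ∈ {0, λ}` and, since `w ∉ F_2`, `x_i = 0` for `i ∈ A`.
There are `3 (2^{m-|A|} - 1)` such `x`; every other nonzero `x` has `r = 4`.
-/

theorem AddMonoidHom.card_ne_zero_mul_card_range {G H : Type*} [AddGroup G] [Fintype G]
    [AddGroup H] [DecidableEq H] (χ : G →+ H) :
    #{g | χ g ≠ 0} * Nat.card χ.range = Fintype.card G * (Nat.card χ.range - 1) := by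
  have hker : #{g | χ g = 0} * Nat.card χ.range = Fintype.card G := by
    rw [← AddSubgroup.index_ker, ← Nat.card_eq_fintype_card, ← AddSubgroup.card_mul_index χ.ker,
      Nat.card_congr (Equiv.subtypeEquivRight fun _ => AddMonoidHom.mem_ker),
      Nat.card_eq_fintype_card, Fintype.card_subtype]
  have hsplit := card_filter_add_card_filter_not (s := univ) (fun g => χ g ≠ 0)
  simp only [not_not, card_univ] at hsplit
  rw [Nat.mul_sub, mul_one]
  nth_rw 1 [← hsplit]
  rw [add_mul, ← hker, Nat.add_sub_cancel]

theorem AddSubgroup.card_eq_one_or_two_or_four {G : Type*} [AddGroup G] (hG : Nat.card G = 4)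
    (R : AddSubgroup G) : Nat.card R = 1 ∨ Nat.card R = 2 ∨ Nat.card R = 4 := by
  have hdvd : Nat.card R ∣ 4 := hG ▸ R.card_addSubgroup_dvd_card
  have : Finite G := Nat.finite_of_card_ne_zero (by omega)
  have hpos : 0 < Nat.card R := Nat.card_pos
  have hle : Nat.card R ≤ 4 := Nat.le_of_dvd (by norm_num) hdvd
  interval_cases h : Nat.card R <;> simp_all

theorem AddSubgroup.eq_zero_or_eq_of_card_le_two {G : Type*} [AddGroup G] [Finite G]
    {R : AddSubgroup G} (hR : Nat.card R ≤ 2) {a y : G} (ha : a ∈ R) (ha0 : a ≠ 0)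
    (hy : y ∈ R) : y = 0 ∨ y = a := by
  by_contra! h
  have h3 : ({0, a, y} : Set G).ncard = 3 :=
    Set.ncard_eq_three.2 ⟨0, a, y, ha0.symm, h.1.symm, h.2.symm, rfl⟩
  have hsub : ({0, a, y} : Set G) ⊆ R := by
    rintro z (rfl | rfl | rfl) <;> first | exact R.zero_mem | assumption
  have := Set.ncard_le_ncard hsub
  rw [h3, ← Nat.card_coe_set_eq, SetLike.coe_sort_coe] at this
  omega

section ThreeValued

variable {α β : Type*} [Fintype α] [DecidableEq α] {x₀ : α} {S : Finset α}

theorem Multiset.map_univ_ite_eq (h : x₀ ∉ S) (a b c : β) :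
    univ.val.map (fun x => if x = x₀ then a else if x ∈ S then b else c)
      = replicate 1 a + replicate #S b + replicate (Fintype.card α - 1 - #S) c := by
  set f := fun x => if x = x₀ then a else if x ∈ S then b else c
  have hsplit : (univ : Finset α).val = x₀ ::ₘ (S.val + (insert x₀ S)ᶜ.val) := by
    rw [← Multiset.cons_add, ← insert_val_of_notMem h, ← union_compl (insert x₀ S),
      ← disjUnion_eq_union _ _ disjoint_compl_right]
    rfl
  have hS : S.val.map f = replicate #S b := by
    refine Multiset.eq_replicate.2 ⟨by simp, fun y hy => ?_⟩
    obtain ⟨x, hx : x ∈ S, rfl⟩ := Multiset.mem_map.1 hy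
    simp [f, ne_of_mem_of_not_mem hx h, hx]
  have hT : (insert x₀ S)ᶜ.val.map f = replicate (Fintype.card α - 1 - #S) c := by
    refine Multiset.eq_replicate.2 ⟨?_, fun y hy => ?_⟩
    · rw [card_map, card_val, card_compl, card_insert_of_notMem h]
      omega
    · obtain ⟨x, hx, rfl⟩ := Multiset.mem_map.1 hy
      rw [Finset.mem_val, mem_compl, mem_insert, not_or] at hx
      simp [f, hx.1, hx.2]
  rw [hsplit, Multiset.map_cons, Multiset.map_add, hS, hT, replicate_one, singleton_add,
    cons_add]
  simp [f]

theorem Finset.image_univ_ite_eq [DecidableEq β] (h : x₀ ∉ S) (hS : S.Nonempty)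
    (hcard : #S + 1 < Fintype.card α) (a b c : β) :
    univ.image (fun x => if x = x₀ then a else if x ∈ S then b else c) = {a, b, c} := by
  rw [show univ.image _ = (univ.val.map _).toFinset from rfl, Multiset.map_univ_ite_eq h]
  simp only [Multiset.toFinset_add, Multiset.toFinset_replicate, one_ne_zero, hS.card_ne_zero,
    show Fintype.card α - 1 - #S ≠ 0 by omega, if_false, singleton_union, insert_union]

end ThreeValued

theorem ZMod.two_eq_zero_or_one : ∀ a : ZMod 2, a = 0 ∨ a = 1 := by
  decide

section QuaternaryField

variable {K : Type} [Field K]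

theorem charP_two_of_card_eq_four [Fintype K] (hK : Fintype.card K = 4) : CharP K 2 :=
  charP_of_card_eq_prime_pow (f := 2) hK

theorem ne_zero_and_ne_one_of_sq_add_self_add_one_eq_zero [CharP K 2] {w : K}
    (hw : w ^ 2 + w + 1 = 0) : w ≠ 0 ∧ w ≠ 1 := by
  refine ⟨by rintro rfl; norm_num at hw, ?_⟩
  rintro rfl
  exact one_ne_zero (by linear_combination hw - CharTwo.two_eq_zero (R := K))

theorem e2_eq_castHom [CharP K 2] : (e2 : ZMod 2 → K) = ZMod.castHom (dvd_refl 2) K := by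
  funext a
  exact (ZMod.cast_eq_val a).symm

theorem e2_eq_one_of_ne_zero {b : ZMod 2} (hb : b ≠ 0) : (e2 b : K) = 1 := by
  rcases ZMod.two_eq_zero_or_one b with rfl | rfl
  · exact absurd rfl hb
  · rw [e2, ZMod.val_one, Nat.cast_one]

theorem e2_add_mul_e2_eq_zero_iff [CharP K 2] {w : K} (hw0 : w ≠ 0) (hw1 : w ≠ 1)
    (a b : ZMod 2) : e2 a + w * e2 b = 0 ↔ a = 0 ∧ b = 0 := by
  have h1w : 1 + w ≠ 0 := fun h => hw1 (by linear_combination h - CharTwo.two_eq_zero (R := K))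
  rw [e2_eq_castHom]
  rcases ZMod.two_eq_zero_or_one a with rfl | rfl <;>
    rcases ZMod.two_eq_zero_or_one b with rfl | rfl <;> simp [hw0, h1w]

end QuaternaryField

section Code

variable {K : Type} [Field K] {m : ℕ}

theorem wtF_erase_zero [DecidableEq K] (D : Finset (Fin m → K)) (x : Fin m → K) :
    wtF (D.erase 0) x = wtF D x := by
  rw [wtF, wtF, filter_erase, erase_eq_of_notMem]
  exact fun h => (mem_filter.1 h).2 (dotProduct_zero x)

theorem codeword_injective_of_single_mem {D : Finset (Fin m → K)}
    (hD : ∀ j, Pi.single j 1 ∈ D) : Function.Injective (codeword D) := by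
  intro x y h
  funext j
  have hj : x ⬝ᵥ Pi.single j 1 = y ⬝ᵥ Pi.single j 1 := congrFun h ⟨_, hD j⟩
  simpa [dotProduct_single] using hj

theorem card_image_codeword_of_single_mem [Fintype K] [DecidableEq K] {D : Finset (Fin m → K)}
    (hD : ∀ j, Pi.single j 1 ∈ D) : #(univ.image (codeword D)) = Fintype.card K ^ m := by
  rw [card_image_of_injective _ (codeword_injective_of_single_mem hD), card_univ,
    Fintype.card_fun, Fintype.card_fin]

noncomputable def extendZero (A : Finset (Fin m)) : (A → ZMod 2) →+ (Fin m → ZMod 2) :=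
  Function.ExtendByZero.hom (ZMod 2) Subtype.val

theorem extendZero_apply {A : Finset (Fin m)} (σ : A → ZMod 2) (i : Fin m) :
    extendZero A σ i = if h : i ∈ A then σ ⟨i, h⟩ else 0 := by
  rw [extendZero, Function.ExtendByZero.hom_apply]
  split_ifs with h
  · exact Subtype.val_injective.extend_apply σ (0 : Fin m → ZMod 2) ⟨i, h⟩
  · exact Function.extend_apply' σ (0 : Fin m → ZMod 2) i fun ⟨j, hj⟩ => h (hj ▸ j.2)

theorem extendZero_injective (A : Finset (Fin m)) : Function.Injective (extendZero A) :=
  Function.extend_injective Subtype.val_injective (0 : Fin m → ZMod 2)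

theorem mem_delta_iff {A : Finset (Fin m)} {v : Fin m → ZMod 2} :
    v ∈ delta A ↔ ∀ i ∉ A, v i = 0 := by
  simp only [delta, supp, mem_filter, mem_univ, true_and, subset_iff]
  exact forall_congr' fun i => not_imp_comm

theorem image_extendZero (A : Finset (Fin m)) : univ.image (extendZero A) = delta A := by
  ext v
  simp only [mem_image, mem_univ, true_and, mem_delta_iff]
  constructor
  · rintro ⟨σ, rfl⟩ i hi
    simp [extendZero_apply, hi]
  · intro hv
    refine ⟨fun i => v i, funext fun i => ?_⟩
    rw [extendZero_apply]
    split_ifs with hi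
    · rfl
    · exact (hv i hi).symm

theorem card_delta (A : Finset (Fin m)) : #(delta A) = 2 ^ #A := by
  rw [← image_extendZero, card_image_of_injective _ (extendZero_injective A)]
  simp

/-- Parametrizes the defining set `F_2^m + wΔ_A` by the group `F_2^m × F_2^A`. -/
noncomputable def definingSetHom [CharP K 2] (w : K) (A : Finset (Fin m)) :
    (Fin m → ZMod 2) × (A → ZMod 2) →+ (Fin m → K) where
  toFun g := dvec w (g.1, extendZero A g.2)
  map_zero' := by ext i; simp [dvec, e2_eq_castHom]
  map_add' g h := by
    ext i
    simp only [dvec, Prod.fst_add, Prod.snd_add, Pi.add_apply, map_add, e2_eq_castHom]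
    ring

theorem definingSetHom_apply [CharP K 2] (w : K) (A : Finset (Fin m))
    (g : (Fin m → ZMod 2) × (A → ZMod 2)) (i : Fin m) :
    definingSetHom w A g i = e2 (g.1 i) + w * e2 (extendZero A g.2 i) := rfl

theorem definingSetHom_injective [CharP K 2] {w : K} (hw0 : w ≠ 0) (hw1 : w ≠ 1)
    (A : Finset (Fin m)) : Function.Injective (definingSetHom w A) := by
  refine (injective_iff_map_eq_zero _).2 fun g hg => ?_
  have hcoord i := (e2_add_mul_e2_eq_zero_iff hw0 hw1 _ _).1 (congrFun hg i)
  refine Prod.ext (funext fun i => (hcoord i).1) (funext fun j => ?_)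
  simpa [extendZero_apply] using (hcoord j).2

theorem image_definingSetHom [CharP K 2] [DecidableEq K] (w : K) (A : Finset (Fin m)) :
    univ.image (definingSetHom w A) = (univ ×ˢ delta A).image (dvec w) := by
  ext x
  simp only [mem_image, mem_univ, true_and, mem_product, ← image_extendZero, Prod.exists]
  constructor
  · rintro ⟨d, σ, rfl⟩
    exact ⟨d, extendZero A σ, ⟨σ, rfl⟩, rfl⟩
  · rintro ⟨d, _, ⟨σ, rfl⟩, rfl⟩
    exact ⟨d, σ, rfl⟩

theorem definingSetHom_single_fst [CharP K 2] (w : K) (A : Finset (Fin m)) (j : Fin m) :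
    definingSetHom w A (Pi.single j 1, 0) = Pi.single j 1 := by
  ext i
  rw [definingSetHom_apply]
  rcases eq_or_ne i j with rfl | h
  · simp [e2_eq_castHom]
  · simp [h, e2_eq_castHom]

theorem card_image_definingSetHom_erase_zero [CharP K 2] [DecidableEq K] {w : K} (hw0 : w ≠ 0)
    (hw1 : w ≠ 1) (A : Finset (Fin m)) :
    #((univ.image (definingSetHom w A)).erase 0) = 2 ^ (m + #A) - 1 := by
  rw [card_erase_of_mem (mem_image.2 ⟨0, mem_univ _, map_zero _⟩),
    card_image_of_injective _ (definingSetHom_injective hw0 hw1 A)]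
  simp [pow_add]

theorem single_mem_image_definingSetHom_erase_zero [CharP K 2] [DecidableEq K] (w : K)
    (A : Finset (Fin m)) (j : Fin m) :
    Pi.single j 1 ∈ (univ.image (definingSetHom w A)).erase 0 :=
  mem_erase.2 ⟨by simp, mem_image.2 ⟨_, mem_univ _, definingSetHom_single_fst w A j⟩⟩

/-- The codeword `c_D(x)` as an additive map on the parameters of `D = F_2^m + wΔ_A`. -/
noncomputable def codewordHom [CharP K 2] (w : K) (A : Finset (Fin m)) (x : Fin m → K) :
    (Fin m → ZMod 2) × (A → ZMod 2) →+ K :=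
  (AddMonoidHom.mk' (dotF x) (dotProduct_add x)).comp (definingSetHom w A)

section CodewordHom

variable [CharP K 2] {w : K} {A : Finset (Fin m)} {x : Fin m → K}

theorem codewordHom_apply (g : (Fin m → ZMod 2) × (A → ZMod 2)) :
    codewordHom w A x g = x ⬝ᵥ definingSetHom w A g := rfl

theorem wtF_image_definingSetHom_mul_card_range [DecidableEq K] (hw0 : w ≠ 0) (hw1 : w ≠ 1) :
    wtF (univ.image (definingSetHom w A)) x * Nat.card (codewordHom w A x).range
      = 2 ^ (m + #A) * (Nat.card (codewordHom w A x).range - 1) := by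
  have hwt : wtF (univ.image (definingSetHom w A)) x = #{g | codewordHom w A x g ≠ 0} := by
    rw [wtF, filter_image, card_image_of_injective _ (definingSetHom_injective hw0 hw1 A)]
    rfl
  rw [hwt, AddMonoidHom.card_ne_zero_mul_card_range]
  simp [pow_add]

theorem codewordHom_single_fst (j : Fin m) : codewordHom w A x (Pi.single j 1, 0) = x j := by
  rw [codewordHom_apply, definingSetHom_single_fst, dotProduct_single, mul_one]

theorem codewordHom_single_snd (j : A) : codewordHom w A x (0, Pi.single j 1) = x j * w := by
  have hd : definingSetHom w A (0, Pi.single j 1) = Pi.single j.1 w := by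
    ext i
    rw [definingSetHom_apply, extendZero_apply]
    by_cases hij : i = j.1
    · subst hij
      simp [e2_eq_castHom]
    · have : ∀ h : i ∈ A, (⟨i, h⟩ : A) ≠ j := fun h hj => hij (congrArg Subtype.val hj)
      simp [hij, this, e2_eq_castHom]
  rw [codewordHom_apply, hd, dotProduct_single]

theorem codewordHom_eq_zero_iff : codewordHom w A x = 0 ↔ x = 0 := by
  refine ⟨fun h => funext fun j => ?_, ?_⟩
  · rw [← codewordHom_single_fst (w := w) (A := A) (x := x) j, h]
    rfl
  · rintro rfl
    ext g
    simp [codewordHom_apply]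

theorem card_range_codewordHom_eq_one_iff : Nat.card (codewordHom w A x).range = 1 ↔ x = 0 :=
  AddSubgroup.card_eq_one.trans (AddMonoidHom.range_eq_bot_iff.trans codewordHom_eq_zero_iff)

-- `b` and `extendZero A g.2` have disjoint supports, so the `w`-component of the product vanishes.
theorem codewordHom_smul_e2 {b : Fin m → ZMod 2} (hb : ∀ i ∈ A, b i = 0) (c : K)
    (g : (Fin m → ZMod 2) × (A → ZMod 2)) :
    codewordHom w A (c • fun i => e2 (b i)) g = c * e2 (b ⬝ᵥ g.1) := by
  rw [codewordHom_apply, smul_dotProduct, smul_eq_mul]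
  congr 1
  simp only [dotProduct, definingSetHom_apply, e2_eq_castHom, map_sum, map_mul]
  refine sum_congr rfl fun i _ => ?_
  have hbg : b i * extendZero A g.2 i = 0 := by
    rw [extendZero_apply]
    split_ifs with h
    · rw [hb i h, zero_mul]
    · rw [mul_zero]
  rw [mul_add, mul_left_comm, ← map_mul, ← map_mul, hbg, map_zero, mul_zero, add_zero]

end CodewordHom

section BinaryMultiples

variable [Fintype K] [DecidableEq K]

def binaryMultiples (A : Finset (Fin m)) : Finset (Fin m → K) :=
  ((univ.erase (0 : K)) ×ˢ (delta Aᶜ).erase 0).image fun p => p.1 • fun i => e2 (p.2 i)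

theorem mem_binaryMultiples_iff {A : Finset (Fin m)} {x : Fin m → K} :
    x ∈ binaryMultiples A ↔
      ∃ c : K, c ≠ 0 ∧ ∃ b : Fin m → ZMod 2, b ≠ 0 ∧ (∀ i ∈ A, b i = 0) ∧
        (c • fun i => e2 (b i)) = x := by
  simp [binaryMultiples, mem_delta_iff, and_assoc]

theorem zero_notMem_binaryMultiples (A : Finset (Fin m)) :
    (0 : Fin m → K) ∉ binaryMultiples A := by
  rw [mem_binaryMultiples_iff]
  rintro ⟨c, hc, b, hb, -, h⟩
  obtain ⟨i, hi⟩ := Function.ne_iff.1 hb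
  have := congrFun h i
  simp [e2_eq_one_of_ne_zero hi, hc] at this

theorem card_binaryMultiples [CharP K 2] (hK : Fintype.card K = 4) (A : Finset (Fin m)) :
    #(binaryMultiples (K := K) A) = 3 * (2 ^ (m - #A) - 1) := by
  have h0 : (0 : Fin m → ZMod 2) ∈ delta Aᶜ := mem_delta_iff.2 fun _ _ => rfl
  rw [binaryMultiples, card_image_of_injOn, card_product, card_erase_of_mem (mem_univ _),
    card_erase_of_mem h0, card_delta, card_compl, card_univ, hK, Fintype.card_fin]
  rintro ⟨c, b⟩ hcb ⟨c', b'⟩ hcb' h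
  simp only [coe_product, coe_erase, coe_univ, Set.mem_prod, Set.mem_sdiff, Set.mem_univ,
    Set.mem_singleton_iff, true_and, mem_coe] at hcb hcb'
  obtain ⟨i, hi⟩ := Function.ne_iff.1 hcb.2.2
  have hci : c = c' * e2 (b' i) := by
    simpa [e2_eq_one_of_ne_zero hi] using congrFun h i
  have hb'i : b' i ≠ 0 := fun h0 => hcb.1 (by simp [hci, h0, e2])
  obtain rfl : c = c' := by rw [hci, e2_eq_one_of_ne_zero hb'i, mul_one]
  have he2 : (fun i => (e2 (b i) : K)) = fun i => e2 (b' i) := smul_right_injective _ hcb.1 h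
  simp only [e2_eq_castHom] at he2
  exact Prod.ext rfl (funext fun j => ZMod.castHom_injective K (congrFun he2 j))

theorem card_binaryMultiples_pos [CharP K 2] (hK : Fintype.card K = 4) {A : Finset (Fin m)}
    (hA : A ≠ univ) : 0 < #(binaryMultiples (K := K) A) := by
  have hAm : #A < m := by simpa using (card_lt_iff_ne_univ A).2 hA
  have := Nat.one_lt_two_pow (n := m - #A) (by omega)
  rw [card_binaryMultiples hK]
  omega

theorem card_binaryMultiples_add_one_lt [CharP K 2] (hK : Fintype.card K = 4) (hm : 2 ≤ m)
    (A : Finset (Fin m)) : #(binaryMultiples (K := K) A) + 1 < Fintype.card (Fin m → K) := by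
  have h1 : 2 ^ (m - #A) ≤ 2 ^ m := Nat.pow_le_pow_right (by norm_num) (by omega)
  have h2 : 4 ≤ 2 ^ m := by simpa using Nat.pow_le_pow_right (n := 2) (by norm_num) hm
  have h3 : 4 * 2 ^ m ≤ 4 ^ m := by
    rw [show 4 ^ m = 2 ^ m * 2 ^ m by rw [← mul_pow]; norm_num]
    exact Nat.mul_le_mul_right _ h2
  rw [card_binaryMultiples hK, Fintype.card_fun, hK, Fintype.card_fin]
  omega

variable [CharP K 2] {w : K} {A : Finset (Fin m)} {x : Fin m → K}

theorem range_codewordHom_ne_top (hw0 : w ≠ 0) (hw1 : w ≠ 1) (hx : x ∈ binaryMultiples A) :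
    (codewordHom w A x).range ≠ ⊤ := by
  obtain ⟨c, hc, b, -, hb, rfl⟩ := mem_binaryMultiples_iff.1 hx
  intro htop
  obtain ⟨g, hg⟩ := (codewordHom w A _).mem_range.1 (htop ▸ AddSubgroup.mem_top (c * w))
  rw [codewordHom_smul_e2 hb, mul_right_inj' hc] at hg
  rcases ZMod.two_eq_zero_or_one (b ⬝ᵥ g.1) with h | h
  · exact hw0 (by simpa [h, e2_eq_castHom] using hg.symm)
  · exact hw1 (by simpa [h, e2_eq_castHom] using hg.symm)

theorem mem_binaryMultiples_of_range_ne_top (hK : Fintype.card K = 4) (hw0 : w ≠ 0)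
    (hw1 : w ≠ 1) (hx : x ≠ 0) (htop : (codewordHom w A x).range ≠ ⊤) :
    x ∈ binaryMultiples A := by
  set R := (codewordHom w A x).range
  have hK4 : Nat.card K = 4 := by rw [Nat.card_eq_fintype_card, hK]
  have hR : Nat.card R ≤ 2 := by
    have h4 : Nat.card R ≠ 4 := fun h => htop ((R.card_eq_iff_eq_top).1 (h.trans hK4.symm))
    rcases R.card_eq_one_or_two_or_four hK4 with h | h | h <;> omega
  obtain ⟨i, hi⟩ : ∃ i, x i ≠ 0 := Function.ne_iff.1 hx
  have hmem : ∀ y ∈ R, y = 0 ∨ y = x i := fun y hy =>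
    AddSubgroup.eq_zero_or_eq_of_card_le_two hR ⟨_, codewordHom_single_fst i⟩ hi hy
  have hval : ∀ j, x j = 0 ∨ x j = x i := fun j => hmem _ ⟨_, codewordHom_single_fst j⟩
  have hA : ∀ j ∈ A, x j = 0 := by
    intro j hj
    refine (hval j).resolve_right fun hxj => ?_
    rcases hmem _ ⟨_, codewordHom_single_snd ⟨j, hj⟩⟩ with h | h <;> rw [hxj] at h
    · exact hw0 ((mul_eq_zero.1 h).resolve_left hi)
    · exact hw1 ((mul_eq_left₀ hi).1 h)
  refine mem_binaryMultiples_iff.2 ⟨x i, hi, fun j => if x j = 0 then 0 else 1,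
    Function.ne_iff.2 ⟨i, by simp [hi]⟩, fun j hj => by simp [hA j hj], funext fun j => ?_⟩
  rcases hval j with h | h
  · simp [h, e2]
  · simp [h, hi, e2_eq_one_of_ne_zero one_ne_zero]

theorem wtF_image_definingSetHom_eq (hK : Fintype.card K = 4) (hw0 : w ≠ 0) (hw1 : w ≠ 1)
    (hmA : 2 ≤ m + #A) (x : Fin m → K) :
    wtF (univ.image (definingSetHom w A)) x =
      if x = 0 then 0 else if x ∈ binaryMultiples A then 2 ^ (m + #A - 1)
        else 3 * 2 ^ (m + #A - 2) := by
  set R := (codewordHom w A x).range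
  have hwt : wtF (univ.image (definingSetHom w A)) x * Nat.card R
      = 2 ^ (m + #A) * (Nat.card R - 1) :=
    wtF_image_definingSetHom_mul_card_range hw0 hw1
  have hpow : 2 ^ (m + #A) = 2 ^ (m + #A - 2) * 4 := by
    rw [show (4 : ℕ) = 2 ^ 2 from rfl, ← pow_add, Nat.sub_add_cancel hmA]
  have hpow' : 2 ^ (m + #A - 1) = 2 ^ (m + #A - 2) * 2 := by
    rw [← pow_succ]
    congr 1
    omega
  have hK4 : Nat.card K = 4 := by rw [Nat.card_eq_fintype_card, hK]
  have h4 : Nat.card R = 4 ↔ R = ⊤ := hK4 ▸ R.card_eq_iff_eq_top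
  split_ifs with hx0 hx
  · rw [card_range_codewordHom_eq_one_iff.2 hx0] at hwt
    simpa using hwt
  · have h1 : Nat.card R ≠ 1 := mt card_range_codewordHom_eq_one_iff.1 hx0
    have h4' : Nat.card R ≠ 4 := fun h => range_codewordHom_ne_top hw0 hw1 hx (h4.1 h)
    obtain h2 : Nat.card R = 2 := by
      rcases R.card_eq_one_or_two_or_four hK4 with h | h | h <;> omega
    rw [h2] at hwt
    omega
  · have htop : R = ⊤ := by
      by_contra htop
      exact hx (mem_binaryMultiples_of_range_ne_top hK hw0 hw1 hx0 htop)
    rw [h4.2 htop] at hwt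
    omega

end BinaryMultiples

end Code

theorem quaternary_code_full_space_and_complex_general {m : ℕ}
    (hF : Fintype.card F = 4) (w : F) (hw : w ^ 2 + w + 1 = 0)
    (A : Finset (Fin m)) (hA : A ≠ Finset.univ) (hmA : 2 ≤ m + A.card) :
    (((Finset.univ ×ˢ delta A).image (dvec w)).erase 0).card = 2 ^ (m + A.card) - 1
    ∧ (Finset.univ.image
        (fun x : Fin m → F => codeword (((Finset.univ ×ˢ delta A).image (dvec w)).erase 0) x)).card
      = 4 ^ m
    ∧ ((∀ x : Fin m → F, wtF (((Finset.univ ×ˢ delta A).image (dvec w)).erase 0) x = 0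
          ∨ 2 ^ (m + A.card - 1) ≤ wtF (((Finset.univ ×ˢ delta A).image (dvec w)).erase 0) x)
        ∧ (∃ x : Fin m → F,
            wtF (((Finset.univ ×ˢ delta A).image (dvec w)).erase 0) x = 2 ^ (m + A.card - 1)))
    ∧ (Finset.univ.val.map
        (fun x : Fin m → F => wtF (((Finset.univ ×ˢ delta A).image (dvec w)).erase 0) x))
      = Multiset.replicate 1 0
        + Multiset.replicate (3 * (2 ^ (m - A.card) - 1)) (2 ^ (m + A.card - 1))
        + Multiset.replicate (4 ^ m - 1 - 3 * (2 ^ (m - A.card) - 1)) (3 * 2 ^ (m + A.card - 2))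
    ∧ ((Finset.univ.image
        (fun x : Fin m → F =>
          wtF (((Finset.univ ×ˢ delta A).image (dvec w)).erase 0) x)).erase 0).card = 2 := by
  have := charP_two_of_card_eq_four hF
  obtain ⟨hw0, hw1⟩ := ne_zero_and_ne_one_of_sq_add_self_add_one_eq_zero hw
  have hm : 2 ≤ m := by
    have : #A < m := by simpa using (card_lt_iff_ne_univ A).2 hA
    omega
  have hpow : 2 ^ (m + #A - 1) = 2 ^ (m + #A - 2) * 2 := by
    rw [← pow_succ]
    congr 1
    omega
  have hpos : 0 < 2 ^ (m + #A - 2) := by positivity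
  have h0 := zero_notMem_binaryMultiples (K := F) A
  have hlow := card_binaryMultiples_pos hF hA
  have hhigh := card_binaryMultiples_add_one_lt hF hm A
  rw [← image_definingSetHom w A]
  simp_rw [wtF_erase_zero, wtF_image_definingSetHom_eq hF hw0 hw1 hmA]
  obtain ⟨x, hx⟩ := card_pos.1 hlow
  refine ⟨card_image_definingSetHom_erase_zero hw0 hw1 A, ?_, ⟨fun x => ?_, x, ?_⟩, ?_, ?_⟩
  · rw [card_image_codeword_of_single_mem (single_mem_image_definingSetHom_erase_zero w A), hF]
  · split_ifs <;> omega
  · rw [if_neg (ne_of_mem_of_not_mem hx h0), if_pos hx]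
  · rw [Multiset.map_univ_ite_eq h0, card_binaryMultiples hF, Fintype.card_fun, hF,
      Fintype.card_fin]
  · have hweights : 0 ∉ ({2 ^ (m + #A - 1), 3 * 2 ^ (m + #A - 2)} : Finset ℕ) := by
      simp only [mem_insert, mem_singleton]
      omega
    rw [image_univ_ite_eq h0 (card_pos.1 hlow) hhigh, erase_insert hweights, card_pair (by omega)]

/-- Corollary 4.3: for `A ⊊ [m]` with `m + |A| ≥ 2` and `D = F_2^m + wΔ_A`, the code
`C_{D^*}` is a `[2^{m+|A|}−1, m, 2^{m+|A|−1}]` two-weight quaternary code with the stated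
weight distribution. -/
theorem quaternary_code_full_space_and_complex {m : ℕ} (hm : 1 ≤ m)
    (hF : Fintype.card F = 4) (w : F) (hw : w ^ 2 + w + 1 = 0)
    (A : Finset (Fin m)) (hA : A ≠ Finset.univ) (hmA : 2 ≤ m + A.card) :
    (((Finset.univ ×ˢ delta A).image (dvec w)).erase 0).card = 2 ^ (m + A.card) - 1
    ∧ (Finset.univ.image
        (fun x : Fin m → F => codeword (((Finset.univ ×ˢ delta A).image (dvec w)).erase 0) x)).card
      = 4 ^ m
    ∧ ((∀ x : Fin m → F, wtF (((Finset.univ ×ˢ delta A).image (dvec w)).erase 0) x = 0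
          ∨ 2 ^ (m + A.card - 1) ≤ wtF (((Finset.univ ×ˢ delta A).image (dvec w)).erase 0) x)
        ∧ (∃ x : Fin m → F,
            wtF (((Finset.univ ×ˢ delta A).image (dvec w)).erase 0) x = 2 ^ (m + A.card - 1)))
    ∧ (Finset.univ.val.map
        (fun x : Fin m → F => wtF (((Finset.univ ×ˢ delta A).image (dvec w)).erase 0) x))
      = Multiset.replicate 1 0
        + Multiset.replicate (3 * (2 ^ (m - A.card) - 1)) (2 ^ (m + A.card - 1))
        + Multiset.replicate (4 ^ m - 1 - 3 * (2 ^ (m - A.card) - 1)) (3 * 2 ^ (m + A.card - 2))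
    ∧ ((Finset.univ.image
        (fun x : Fin m → F =>
          wtF (((Finset.univ ×ˢ delta A).image (dvec w)).erase 0) x)).erase 0).card = 2 :=
  quaternary_code_full_space_and_complex_general hF w hw A hA hmA
end

section
/- For all integers m ≥ 2 and s with 2 ≤ s ≤ 2m − 1, Σ_{i=0}^{m−1} ⌈(3·2^{2m−2} − 3·2^{s−2}) / 4^i⌉ = 4^m − 2^s. -/
lemma sumfl : ∀ t m : ℕ, t + 3 ≤ 2 * m →
    ∑ i ∈ Finset.range m, ⌊(3 * 2 ^ t : ℚ) / 4 ^ i⌋ = 2 ^ (t + 2) - 1 := by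
  intro t
  induction t using Nat.strong_induction_on with
  | _ t ih =>
    match t, ih with
    | 0, _ =>
      intro m hm
      have hsub : Finset.range 1 ⊆ Finset.range m := by
        apply Finset.range_subset_range.2; omega
      rw [← Finset.sum_subset hsub]
      · norm_num
      · intro i hi hni
        simp only [Finset.mem_range] at hi hni
        have h1 : 1 ≤ i := by omega
        apply Int.floor_eq_zero_iff.2
        constructor
        · positivity
        · rw [div_lt_one (by positivity)]
          calc (3 * 2 ^ 0 : ℚ) = 3 := by norm_num
            _ < 4 ^ 1 := by norm_num
            _ ≤ 4 ^ i := by exact pow_le_pow_right₀ (by norm_num) h1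
    | 1, _ =>
      intro m hm
      have hsub : Finset.range 2 ⊆ Finset.range m := by
        apply Finset.range_subset_range.2; omega
      rw [← Finset.sum_subset hsub]
      · norm_num [Finset.sum_range_succ]
      · intro i hi hni
        simp only [Finset.mem_range] at hi hni
        have h1 : 2 ≤ i := by omega
        apply Int.floor_eq_zero_iff.2
        constructor
        · positivity
        · rw [div_lt_one (by positivity)]
          calc (3 * 2 ^ 1 : ℚ) = 6 := by norm_num
            _ < 4 ^ 2 := by norm_num
            _ ≤ 4 ^ i := by exact pow_le_pow_right₀ (by norm_num) h1
    | (t+2), ih =>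
      intro m hm
      obtain ⟨k, rfl⟩ : ∃ k, m = k + 1 := ⟨m - 1, by omega⟩
      rw [Finset.sum_range_succ']
      have hshift : ∀ i ∈ Finset.range k,
          ⌊(3 * 2 ^ (t+2) : ℚ) / 4 ^ (i+1)⌋ = ⌊(3 * 2 ^ t : ℚ) / 4 ^ i⌋ := by
        intro i _
        congr 1
        rw [pow_succ, pow_succ]
        have : (4:ℚ)^i ≠ 0 := by positivity
        field_simp
        ring
      rw [Finset.sum_congr rfl hshift, ih t (by omega) k (by omega)]
      have h0 : ⌊(3 * 2 ^ (t+2) : ℚ) / 4 ^ 0⌋ = (3 * 2 ^ (t+2) : ℤ) := by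
        rw [pow_zero, div_one,
          show (3 * 2 ^ (t+2) : ℚ) = ((3 * 2 ^ (t+2) : ℤ) : ℚ) by push_cast; ring,
          Int.floor_intCast]
      rw [h0, show t+2+2 = (t+2)+2 from rfl, pow_add]
      ring

lemma sumgeo : ∀ m : ℕ, ∑ i ∈ Finset.range m, (3 * 2 ^ (2 * m - 2 - 2 * i) : ℤ) = 4 ^ m - 1 := by
  intro m
  induction m with
  | zero => simp
  | succ n ihn =>
    rw [Finset.sum_range_succ]
    have hcongr : ∀ i ∈ Finset.range n,
        (3 * 2 ^ (2 * (n+1) - 2 - 2 * i) : ℤ) = 4 * (3 * 2 ^ (2 * n - 2 - 2 * i)) := by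
      intro i hi
      rw [Finset.mem_range] at hi
      rw [show 2 * (n+1) - 2 - 2 * i = (2 * n - 2 - 2 * i) + 2 by omega, pow_add]
      ring
    rw [Finset.sum_congr rfl hcongr, ← Finset.mul_sum, ihn,
      show 2 * (n+1) - 2 - 2 * n = 0 by omega, pow_succ]
    ring

/-- For all integers `m ≥ 2` and `2 ≤ s ≤ 2m − 1`:
`Σ_{i=0}^{m−1} ⌈(3·2^{2m−2} − 3·2^{s−2}) / 4^i⌉ = 4^m − 2^s`. -/
theorem griesmer_sum_identity (m s : ℕ) (hm : 2 ≤ m) (hs : 2 ≤ s) (hs' : s ≤ 2 * m - 1) :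
    ∑ i ∈ Finset.range m, ⌈((3 * 2 ^ (2 * m - 2) - 3 * 2 ^ (s - 2) : ℚ)) / 4 ^ i⌉
      = (4 ^ m - 2 ^ s : ℤ) := by
  have key : ∀ i ∈ Finset.range m,
      ⌈((3 * 2 ^ (2 * m - 2) - 3 * 2 ^ (s - 2) : ℚ)) / 4 ^ i⌉
        = 3 * 2 ^ (2 * m - 2 - 2 * i) - ⌊(3 * 2 ^ (s - 2) : ℚ) / 4 ^ i⌋ := by
    intro i hi
    rw [Finset.mem_range] at hi
    have h1 : ((3 * 2 ^ (2 * m - 2) - 3 * 2 ^ (s - 2) : ℚ)) / 4 ^ i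
        = (-((3 * 2 ^ (s - 2) : ℚ) / 4 ^ i)) + ((3 * 2 ^ (2 * m - 2 - 2 * i) : ℤ) : ℚ) := by
      have h2 : (2:ℚ) ^ (2 * m - 2) = 2 ^ (2 * m - 2 - 2 * i) * 4 ^ i := by
        rw [show (4:ℚ) = 2^2 by norm_num, ← pow_mul, ← pow_add]
        congr 1; omega
      push_cast
      rw [h2]
      have h4 : (4:ℚ)^i ≠ 0 := by positivity
      field_simp
      ring
    rw [h1, Int.ceil_add_intCast, Int.ceil_neg]
    ring
  rw [Finset.sum_congr rfl key, Finset.sum_sub_distrib, sumgeo m,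
    sumfl (s - 2) m (by omega), show s - 2 + 2 = s by omega]
  ring
end
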